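/- arXiv:0802.1764 — 2 statements merged into one kernel-verified Lean document; each statement's English description precedes it below -/
import Mathlib

section
/- For every real number s and every positive integer x, ∑_{i=1}^{x} (1/i^s) · ∑_{j=x+1}^{x²} (1/j^s) · M_{⌊x²/(i·j)⌋}(s) = H_{x}(s) − ∑_{i=1}^{x} ∑_{j=1}^{x} (1/(i·j)^s) · M_{⌊x²/(i·j)⌋}(s). -/
/-!
Twisting by the completely multiplicative weight `n ↦ n^{-s}` turns `ζ * μ = 1` into
`(n^{-s}) * (μ(n) n^{-s}) = 1`, and the partial sums up to `N` of this Dirichlet convolution are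
`∑_{j ≤ N} j^{-s} M_{⌊N/j⌋}(s)`, which therefore equals `1` for `N ≥ 1`. Since
`⌊⌊x²/i⌋/j⌋ = ⌊x²/(ij)⌋`, for each `i ≤ x` the sum `∑_{j ≤ x²} j^{-s} M_{⌊x²/(ij)⌋}(s)` is `1`;
splitting it at `j = x` gives the identity.
-/

open Finset ArithmeticFunction

/-- Generalized oscillatory number in power `s`: `M_n(s) = ∑_{k=1}^{n} μ(k)/k^s`. -/
noncomputable def Mgen (s : ℝ) (n : ℕ) : ℝ :=
  ∑ k ∈ Finset.Icc 1 n, (moebius k : ℝ) / (k : ℝ) ^ s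

/-- Generalized harmonic number in power `s`: `H_n(s) = ∑_{k=1}^{n} 1/k^s`. -/
noncomputable def Hgen (s : ℝ) (n : ℕ) : ℝ :=
  ∑ k ∈ Finset.Icc 1 n, 1 / (k : ℝ) ^ s

open scoped ArithmeticFunction.zeta ArithmeticFunction.Moebius

theorem Nat.Icc_one_eq_Ioc_zero (n : ℕ) : Icc 1 n = Ioc 0 n :=
  Icc_add_one_left_eq_Ioc 0 n

namespace ArithmeticFunction

theorem pmul_mul_pmul_of_map_mul {R : Type*} [CommSemiring R] (f g w : ArithmeticFunction R)
    (hw : ∀ a b, w (a * b) = w a * w b) : f.pmul w * g.pmul w = (f * g).pmul w := by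
  ext n
  simp only [mul_apply, pmul_apply, sum_mul]
  refine sum_congr rfl fun d hd => ?_
  rw [← (Nat.mem_divisorsAntidiagonal.mp hd).1, hw]
  ring

theorem zeta_pmul_mul_moebius_pmul {R : Type*} [CommRing R] (w : ArithmeticFunction R)
    (hw_one : w 1 = 1) (hw : ∀ a b, w (a * b) = w a * w b) :
    (ζ : ArithmeticFunction R).pmul w * (μ : ArithmeticFunction R).pmul w = 1 := by
  rw [pmul_mul_pmul_of_map_mul _ _ _ hw, coe_zeta_mul_coe_moebius]
  ext n
  rcases eq_or_ne n 1 with rfl | hn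
  · simp [hw_one]
  · simp [one_apply_ne hn]

-- The `if` is needed: an arithmetic function vanishes at `0`, but `(0 : ℝ) ^ (0 : ℝ) = 1`.
noncomputable def oneDivRpow (s : ℝ) : ArithmeticFunction ℝ :=
  ⟨fun n => if n = 0 then 0 else 1 / (n : ℝ) ^ s, if_pos rfl⟩

theorem oneDivRpow_apply {s : ℝ} {n : ℕ} (hn : n ≠ 0) : oneDivRpow s n = 1 / (n : ℝ) ^ s :=
  if_neg hn

theorem oneDivRpow_mul (s : ℝ) (a b : ℕ) :
    oneDivRpow s (a * b) = oneDivRpow s a * oneDivRpow s b := by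
  rcases eq_or_ne a 0 with rfl | ha
  · simp
  rcases eq_or_ne b 0 with rfl | hb
  · simp
  rw [oneDivRpow_apply ha, oneDivRpow_apply hb, oneDivRpow_apply (mul_ne_zero ha hb),
    Nat.cast_mul, Real.mul_rpow (Nat.cast_nonneg a) (Nat.cast_nonneg b), one_div_mul_one_div]

end ArithmeticFunction

theorem Mgen_eq_sum_Ioc_moebius_pmul (s : ℝ) (n : ℕ) :
    Mgen s n = ∑ k ∈ Ioc 0 n, (μ : ArithmeticFunction ℝ).pmul (oneDivRpow s) k := by
  rw [Mgen, Nat.Icc_one_eq_Ioc_zero]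
  refine sum_congr rfl fun k hk => ?_
  rw [pmul_apply, oneDivRpow_apply (mem_Ioc.mp hk).1.ne', intCoe_apply, div_eq_mul_one_div]

theorem sum_one_div_rpow_mul_Mgen_div (s : ℝ) {N L : ℕ} (hN : 1 ≤ N) (hNL : N ≤ L) :
    ∑ j ∈ Icc 1 L, 1 / (j : ℝ) ^ s * Mgen s (N / j) = 1 := by
  have tail_vanishes (j : ℕ) (_ : j ∈ Icc 1 L) (hj : j ∉ Icc 1 N) :
      1 / (j : ℝ) ^ s * Mgen s (N / j) = 0 := by
    rw [Nat.div_eq_of_lt (by grind), Mgen, Icc_eq_empty_of_lt one_pos, sum_empty, mul_zero]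
  rw [← sum_subset (Icc_subset_Icc_right hNL) tail_vanishes, Nat.Icc_one_eq_Ioc_zero]
  calc ∑ j ∈ Ioc 0 N, 1 / (j : ℝ) ^ s * Mgen s (N / j)
      = ∑ n ∈ Ioc 0 N, ((ζ : ArithmeticFunction ℝ).pmul (oneDivRpow s) *
          (μ : ArithmeticFunction ℝ).pmul (oneDivRpow s)) n := by
        rw [sum_Ioc_mul_eq_sum_sum]
        refine sum_congr rfl fun j hj => ?_
        have hj0 : j ≠ 0 := (mem_Ioc.mp hj).1.ne'
        rw [Mgen_eq_sum_Ioc_moebius_pmul, pmul_apply, natCoe_apply, zeta_apply_ne hj0,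
          oneDivRpow_apply hj0, Nat.cast_one, one_mul]
    _ = 1 := by
        rw [zeta_pmul_mul_moebius_pmul _ (by simp [oneDivRpow_apply]) (oneDivRpow_mul s)]
        simp [one_apply, hN]

theorem stmt_3_general (s : ℝ) (x : ℕ) :
    ∑ i ∈ Finset.Icc 1 x, (1 / (i : ℝ) ^ s) *
      ∑ j ∈ Finset.Icc (x + 1) (x ^ 2), (1 / (j : ℝ) ^ s) * Mgen s (x ^ 2 / (i * j)) =
    Hgen s x -
      ∑ i ∈ Finset.Icc 1 x, ∑ j ∈ Finset.Icc 1 x,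
        (1 / ((i : ℝ) * (j : ℝ)) ^ s) * Mgen s (x ^ 2 / (i * j)) := by
  have hxx : x ≤ x ^ 2 := Nat.le_self_pow two_ne_zero x
  have tail_eq (i : ℕ) (hi : i ∈ Icc 1 x) :
      ∑ j ∈ Icc (x + 1) (x ^ 2), 1 / (j : ℝ) ^ s * Mgen s (x ^ 2 / (i * j))
        = 1 - ∑ j ∈ Icc 1 x, 1 / (j : ℝ) ^ s * Mgen s (x ^ 2 / (i * j)) := by
    obtain ⟨hi1, hix⟩ := mem_Icc.mp hi
    have full_sum := sum_one_div_rpow_mul_Mgen_div s (N := x ^ 2 / i) (L := x ^ 2)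
      ((Nat.one_le_div_iff hi1).mpr (hix.trans hxx)) (Nat.div_le_self _ _)
    simp only [Nat.div_div_eq_div_mul] at full_sum
    rw [Nat.Icc_one_eq_Ioc_zero, ← sum_Ioc_consecutive _ (Nat.zero_le x) hxx] at full_sum
    rw [Icc_add_one_left_eq_Ioc, Nat.Icc_one_eq_Ioc_zero]
    exact eq_sub_of_add_eq' full_sum
  rw [sum_congr rfl fun i hi => by rw [tail_eq i hi]]
  simp only [Hgen, mul_sub, mul_one, sum_sub_distrib, mul_sum, one_div, mul_inv, mul_assoc,
    Real.mul_rpow (Nat.cast_nonneg _) (Nat.cast_nonneg _)]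

theorem stmt_3 (s : ℝ) (x : ℕ) (hx : 0 < x) :
    ∑ i ∈ Finset.Icc 1 x, (1 / (i : ℝ) ^ s) *
      ∑ j ∈ Finset.Icc (x + 1) (x ^ 2), (1 / (j : ℝ) ^ s) * Mgen s (x ^ 2 / (i * j)) =
    Hgen s x -
      ∑ i ∈ Finset.Icc 1 x, ∑ j ∈ Finset.Icc 1 x,
        (1 / ((i : ℝ) * (j : ℝ)) ^ s) * Mgen s (x ^ 2 / (i * j)) :=
  stmt_3_general s x
end

section
/- For every positive integer x, M(x²) = 2·M(x) − x²·(m_x)² + ∑_{i=1}^{x} ∑_{j=1}^{x} μ(i)·μ(j)·{x²/(i·j)}, where M(n) = ∑_{k=1}^{n} μ(k) is the Mertens function, m_n = ∑_{k=1}^{n} μ(k)/k, and {t} = t − ⌊t⌋ denotes the fractional part of t. -/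
/-!
Because `μ = μ * μ * ζ`, the Mertens function is `M(N) = ∑_{ij ≤ N} μ(i) μ(j) ⌊N / ij⌋`.
Cut the hyperbola `ij ≤ N` at `x = ⌊√N⌋`: every point has `i ≤ x` or `j ≤ x`, and for fixed
`i ≤ x` the inner sum is `∑_{j ≤ N/i} μ(j) ⌊(N/i) / j⌋ = 1`. Both strips therefore contribute
`M(x)`, and the square `i, j ≤ x`, counted twice, is subtracted once. Writing `⌊t⌋ = t - {t}` in
that square turns its main part into `N m_x²`.
-/

open Finset ArithmeticFunction

/-- Mertens function: `M(n) = ∑_{k=1}^{n} μ(k)`. -/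
def mertens (n : ℕ) : ℤ :=
  ∑ k ∈ Finset.Icc 1 n, moebius k

/-- `m_n = ∑_{k=1}^{n} μ(k)/k`. -/
noncomputable def mSum (n : ℕ) : ℝ :=
  ∑ k ∈ Finset.Icc 1 n, (moebius k : ℝ) / (k : ℝ)

open scoped ArithmeticFunction.Moebius ArithmeticFunction.zeta

theorem sum_Ioc_sum_Ioc_div_eq_hyperbola {G : Type*} [AddCommGroup G] (F : ℕ → ℕ → G)
    (N : ℕ) :
    ∑ i ∈ Ioc 0 N, ∑ j ∈ Ioc 0 (N / i), F i j =
      ∑ i ∈ Ioc 0 N.sqrt, ∑ j ∈ Ioc 0 (N / i), F i j +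
        ∑ j ∈ Ioc 0 N.sqrt, ∑ i ∈ Ioc 0 (N / j), F i j -
          ∑ i ∈ Ioc 0 N.sqrt, ∑ j ∈ Ioc 0 N.sqrt, F i j := by
  rw [sum_comm (s := Ioc 0 N.sqrt) (t := Ioc 0 N.sqrt)]
  set x := N.sqrt
  have hxN : x * x ≤ N := Nat.sqrt_le N
  have hNx : N < (x + 1) * (x + 1) := Nat.lt_succ_sqrt N
  have hx_le_div : ∀ j ∈ Ioc 0 x, x ≤ N / j := fun j hj =>
    (Nat.le_div_iff_mul_le (mem_Ioc.1 hj).1).2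
      ((Nat.mul_le_mul_left x (mem_Ioc.1 hj).2).trans hxN)
  -- the points with `i > x` are exactly those with `j ≤ x < i ≤ N / j`
  have hswap : ∑ i ∈ Ioc x N, ∑ j ∈ Ioc 0 (N / i), F i j =
      ∑ j ∈ Ioc 0 x, ∑ i ∈ Ioc x (N / j), F i j := by
    refine sum_comm' fun i j => ?_
    simp only [mem_Ioc]
    constructor
    · rintro ⟨⟨hxi, hiN⟩, hj, hji⟩
      have hij : j * i ≤ N := (Nat.le_div_iff_mul_le (by omega)).1 hji
      refine ⟨⟨hxi, (Nat.le_div_iff_mul_le hj).2 (by linarith)⟩, hj, ?_⟩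
      by_contra! h
      nlinarith
    · rintro ⟨⟨hxi, hij⟩, hj, hjx⟩
      have hij : i * j ≤ N := (Nat.le_div_iff_mul_le hj).1 hij
      refine ⟨⟨hxi, ?_⟩, hj, (Nat.le_div_iff_mul_le (by omega)).2 (by linarith)⟩
      nlinarith
  rw [← sum_Ioc_consecutive _ (Nat.zero_le x) (Nat.sqrt_le_self N), hswap, add_sub_assoc,
    ← sum_sub_distrib]
  congr 1
  refine sum_congr rfl fun j hj => ?_
  rw [← sum_Ioc_consecutive _ (Nat.zero_le x) (hx_le_div j hj), add_sub_cancel_left]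

theorem sum_Ioc_moebius_mul_div {M : ℕ} (hM : 0 < M) :
    ∑ j ∈ Ioc 0 M, μ j * ((M / j : ℕ) : ℤ) = 1 := by
  rw [← sum_Ioc_mul_zeta_eq_sum, moebius_mul_coe_zeta,
    sum_eq_single_of_mem 1 (mem_Ioc.2 ⟨one_pos, hM⟩)]
  · simp
  · intro n _ hn1
    simp [hn1]

theorem mertens_eq_sum_Ioc (n : ℕ) : mertens n = ∑ k ∈ Ioc 0 n, μ k := by
  rw [mertens, ← Icc_add_one_left_eq_Ioc, zero_add]

theorem mertens_eq_sum_Ioc_sum_Ioc_div (N : ℕ) :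
    mertens N = ∑ i ∈ Ioc 0 N, ∑ j ∈ Ioc 0 (N / i), μ i * μ j * ((N / (i * j) : ℕ) : ℤ) := by
  have hμ : mertens N = ∑ n ∈ Ioc 0 N, (μ * (μ * ζ) : ArithmeticFunction ℤ) n := by
    rw [moebius_mul_coe_zeta, mul_one, mertens_eq_sum_Ioc]
  rw [hμ, sum_Ioc_mul_eq_sum_sum]
  refine sum_congr rfl fun i _ => ?_
  rw [sum_Ioc_mul_zeta_eq_sum, mul_sum]
  refine sum_congr rfl fun j _ => ?_
  rw [Nat.div_div_eq_div_mul, mul_assoc]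

theorem mertens_eq_two_mul_mertens_sqrt_sub (N : ℕ) :
    mertens N = 2 * mertens N.sqrt -
      ∑ i ∈ Ioc 0 N.sqrt, ∑ j ∈ Ioc 0 N.sqrt, μ i * μ j * ((N / (i * j) : ℕ) : ℤ) := by
  have hstrip : ∑ i ∈ Ioc 0 N.sqrt, ∑ j ∈ Ioc 0 (N / i), μ i * μ j * ((N / (i * j) : ℕ) : ℤ) =
      mertens N.sqrt := by
    rw [mertens_eq_sum_Ioc]
    refine sum_congr rfl fun i hi => ?_
    have hiN : 0 < N / i := Nat.div_pos ((mem_Ioc.1 hi).2.trans N.sqrt_le_self) (mem_Ioc.1 hi).1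
    simp_rw [mul_assoc, ← mul_sum, ← Nat.div_div_eq_div_mul]
    rw [sum_Ioc_moebius_mul_div hiN, mul_one]
  have hstrip' : ∑ j ∈ Ioc 0 N.sqrt, ∑ i ∈ Ioc 0 (N / j), μ i * μ j * ((N / (i * j) : ℕ) : ℤ) =
      mertens N.sqrt := by
    rw [← hstrip]
    refine sum_congr rfl fun j _ => sum_congr rfl fun i _ => ?_
    rw [mul_comm j i, mul_comm (μ i)]
  rw [mertens_eq_sum_Ioc_sum_Ioc_div, sum_Ioc_sum_Ioc_div_eq_hyperbola, hstrip, hstrip', two_mul]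

theorem natCast_div_eq_div_sub_fract {K : Type*} [Field K] [LinearOrder K] [IsStrictOrderedRing K]
    [FloorRing K] (a b : ℕ) : ((a / b : ℕ) : K) = a / b - Int.fract ((a : K) / b) := by
  rw [← Nat.floor_div_eq_div (K := K), natCast_floor_eq_intCast_floor (by positivity),
    Int.self_sub_fract]

theorem mul_mSum_sq (N n : ℕ) :
    (N : ℝ) * mSum n ^ 2 = ∑ i ∈ Icc 1 n, ∑ j ∈ Icc 1 n, μ i * μ j * ((N : ℝ) / (i * j)) := by
  rw [sq, mSum, sum_mul_sum, mul_sum]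
  refine sum_congr rfl fun i _ => ?_
  rw [mul_sum]
  refine sum_congr rfl fun j _ => ?_
  ring

theorem mertens_eq_two_mul_mertens_sqrt_sub_add_sum_fract (N : ℕ) :
    (mertens N : ℝ) = 2 * mertens N.sqrt - N * mSum N.sqrt ^ 2 +
      ∑ i ∈ Icc 1 N.sqrt, ∑ j ∈ Icc 1 N.sqrt, μ i * μ j * Int.fract ((N : ℝ) / (i * j)) := by
  rw [mertens_eq_two_mul_mertens_sqrt_sub, mul_mSum_sq, ← Icc_add_one_left_eq_Ioc, zero_add]
  simp only [Int.cast_sub, Int.cast_mul, Int.cast_ofNat, Int.cast_sum, Int.cast_natCast,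
    natCast_div_eq_div_sub_fract, Nat.cast_mul, mul_sub, sum_sub_distrib]
  ring

theorem stmt_14_general (x : ℕ) :
    (mertens (x ^ 2) : ℝ) = 2 * (mertens x : ℝ) - (x : ℝ) ^ 2 * (mSum x) ^ 2 +
      ∑ i ∈ Finset.Icc 1 x, ∑ j ∈ Finset.Icc 1 x,
        (moebius i : ℝ) * (moebius j : ℝ) *
          Int.fract ((x : ℝ) ^ 2 / ((i : ℝ) * (j : ℝ))) := by
  have h := mertens_eq_two_mul_mertens_sqrt_sub_add_sum_fract (x ^ 2)
  rw [Nat.sqrt_eq'] at h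
  exact_mod_cast h

theorem stmt_14 (x : ℕ) (hx : 0 < x) :
    (mertens (x ^ 2) : ℝ) = 2 * (mertens x : ℝ) - (x : ℝ) ^ 2 * (mSum x) ^ 2 +
      ∑ i ∈ Finset.Icc 1 x, ∑ j ∈ Finset.Icc 1 x,
        (moebius i : ℝ) * (moebius j : ℝ) *
          Int.fract ((x : ℝ) ^ 2 / ((i : ℝ) * (j : ℝ))) :=
  stmt_14_general x
end
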